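/- Let A, B, C be noncollinear points in the Euclidean plane, let D be a point with D ∉ {A, B, C} and D not on any of the lines BC, CA, AB, and let r > 0, with ι the inversion of center D and radius r. Let A_p = ι(F_A), B_p = ι(F_B), C_p = ι(F_C), where F_A, F_B, F_C are the orthogonal projections of D onto the lines BC, CA, AB, and assume A_p, B_p, C_p are noncollinear. Let A', B', C' be the vertices of the negative-pedal triangle of ABC with respect to D, assumed pairwise distinct. Then the triangles A'B'C' and A_pB_pC_p are homothetic: there exists a real number k ≠ 0 such that A' − B' = k • (A_p − B_p), B' − C' = k • (B_p − C_p), and C' − A' = k • (C_p − A_p). -/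

import Mathlib

/-!
`A'` and `B'` both lie on the line through `C` perpendicular to `C - D`, so `A' - B' ⟂ C - D`.
The pole `X` of any line through `C` satisfies `⟪X - D, C - D⟫ = r ^ 2`, so `Ap - Bp ⟂ C - D`
as well; in the plane, `A' - B'` is therefore a multiple of `Ap - Bp`. The three ratios
coincide because the sides of both triangles sum to zero while two sides of the nondegenerate
polar triangle are linearly independent.
-/

open EuclideanGeometry

noncomputable section

/-- The Euclidean plane. -/
abbrev Pt : Type := EuclideanSpace ℝ (Fin 2)

/-- The line (affine span) through two points. -/
def L (X Y : Pt) : AffineSubspace ℝ Pt := affineSpan ℝ {X, Y}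

/-- `F` is the orthogonal projection (foot of the perpendicular) of `D` onto the line `XY`. -/
def IsFoot (D X Y F : Pt) : Prop := F ∈ L X Y ∧ (inner ℝ (D - F) (X - Y) : ℝ) = 0

/-- The inversion with center `D` and radius `r`. -/
def invPt (D : Pt) (r : ℝ) (X : Pt) : Pt := D + (r ^ 2 / ‖X - D‖ ^ 2) • (X - D)

open Module

instance : Fact (finrank ℝ Pt = 2) := ⟨finrank_euclideanSpace_fin⟩

theorem eq_of_not_collinear_of_smul_sides_sum_eq_zero {V : Type*} [AddCommGroup V] [Module ℝ V]
    {P Q R : V} (h : ¬ Collinear ℝ ({P, Q, R} : Set V)) {k₁ k₂ k₃ : ℝ}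
    (hk : k₁ • (P - Q) + k₂ • (Q - R) + k₃ • (R - P) = 0) : k₁ = k₃ ∧ k₂ = k₃ := by
  have hrel : (k₁ - k₃) • (P - Q) = (k₂ - k₃) • (R - Q) := by
    rw [← sub_eq_zero, ← hk]; module
  by_contra hne
  apply h
  by_cases h₁ : k₁ = k₃
  · have h₂ : k₂ - k₃ ≠ 0 := sub_ne_zero.2 fun h₂ => hne ⟨h₁, h₂⟩
    rw [h₁, sub_self, zero_smul, eq_comm, smul_eq_zero_iff_right h₂, sub_eq_zero] at hrel
    rw [hrel, Set.pair_eq_singleton]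
    exact collinear_pair ℝ P Q
  · have hP : P = AffineMap.lineMap Q R ((k₂ - k₃) / (k₁ - k₃)) := by
      rw [AffineMap.lineMap_apply, vsub_eq_sub, vadd_eq_add, div_eq_inv_mul, mul_smul, ← hrel,
        inv_smul_smul₀ (sub_ne_zero.2 h₁)]
      abel
    exact collinear_insert_of_mem_affineSpan_pair
      (hP ▸ AffineMap.lineMap_mem_affineSpan_pair _ _ _)

theorem IsFoot.inner_sub_eq_norm_sq {D X Y F P : Pt} (hF : IsFoot D X Y F) (hP : P ∈ L X Y) :
    inner ℝ (F - D) (P - D) = ‖F - D‖ ^ 2 := by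
  obtain ⟨a, ha⟩ : ∃ a : ℝ, a • (X - Y) = P - F := by
    rw [← Submodule.mem_span_singleton, ← vsub_eq_sub, ← vectorSpan_pair, ← direction_affineSpan]
    exact AffineSubspace.vsub_mem_direction hP hF.1
  have hperp : inner ℝ (F - D) (P - F) = 0 := by
    rw [← ha, inner_smul_right, ← neg_sub, inner_neg_left, hF.2, neg_zero, mul_zero]
  rw [show P - D = (F - D) + (P - F) by abel, inner_add_right, hperp, add_zero,
    real_inner_self_eq_norm_sq]

theorem IsFoot.inner_invPt_sub_eq_sq {D X Y F P : Pt} (r : ℝ) (hF : IsFoot D X Y F)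
    (hD : D ∉ L X Y) (hP : P ∈ L X Y) : inner ℝ (invPt D r F - D) (P - D) = r ^ 2 := by
  have hFD : ‖F - D‖ ≠ 0 := by
    rw [norm_ne_zero_iff, sub_ne_zero]
    rintro rfl
    exact hD hF.1
  rw [invPt, add_sub_cancel_left, inner_smul_left, hF.inner_sub_eq_norm_sq hP,
    RCLike.conj_to_real, div_mul_cancel₀ _ (pow_ne_zero 2 hFD)]

theorem inner_invPt_sub_invPt_eq_zero {D X Y X' Y' F G P : Pt} (r : ℝ)
    (hF : IsFoot D X Y F) (hD : D ∉ L X Y) (hG : IsFoot D X' Y' G) (hD' : D ∉ L X' Y')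
    (hP : P ∈ L X Y) (hP' : P ∈ L X' Y') :
    inner ℝ (invPt D r F - invPt D r G) (P - D) = 0 := by
  rw [← sub_sub_sub_cancel_right _ _ D, inner_sub_left, hF.inner_invPt_sub_eq_sq r hD hP,
    hG.inner_invPt_sub_eq_sq r hD' hP', sub_self]

theorem exists_eq_smul_of_inner_eq_zero {V : Type*} [NormedAddCommGroup V]
    [InnerProductSpace ℝ V] [Fact (finrank ℝ V = 2)] {u v w : V} (hw : w ≠ 0) (hv : v ≠ 0)
    (hu : inner ℝ u w = 0) (hvw : inner ℝ v w = 0) : ∃ k : ℝ, u = k • v := by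
  obtain ⟨k, hk⟩ := Submodule.mem_span_singleton.1 <|
    Submodule.mem_span_singleton_of_inner_eq_zero_of_inner_eq_zero (u := u) hw hv
      (by rwa [real_inner_comm]) (by rwa [real_inner_comm])
  exact ⟨k, hk.symm⟩

theorem negative_pedal_homothetic_polar_general
    (A B C D : Pt) (r : ℝ)
    (hDa : D ∉ L B C) (hDb : D ∉ L C A) (hDc : D ∉ L A B)
    (Fa Fb Fc Ap Bp Cp : Pt)
    (hFa : IsFoot D B C Fa) (hFb : IsFoot D C A Fb) (hFc : IsFoot D A B Fc)
    (hAp : Ap = invPt D r Fa) (hBp : Bp = invPt D r Fb) (hCp : Cp = invPt D r Fc)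
    (hpnc : ¬ Collinear ℝ ({Ap, Bp, Cp} : Set Pt))
    (A' B' C' : Pt)
    (h1 : (inner ℝ (A' - B) (B - D) : ℝ) = 0) (h2 : (inner ℝ (A' - C) (C - D) : ℝ) = 0)
    (h3 : (inner ℝ (B' - C) (C - D) : ℝ) = 0) (h4 : (inner ℝ (B' - A) (A - D) : ℝ) = 0)
    (h5 : (inner ℝ (C' - A) (A - D) : ℝ) = 0) (h6 : (inner ℝ (C' - B) (B - D) : ℝ) = 0)
    (hd1 : A' ≠ B') :
    ∃ k : ℝ, k ≠ 0 ∧ A' - B' = k • (Ap - Bp) ∧ B' - C' = k • (Bp - Cp) ∧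
      C' - A' = k • (Cp - Ap) := by
  have hA : A - D ≠ 0 := sub_ne_zero.2 fun h => hDb (h ▸ right_mem_affineSpan_pair ℝ C A)
  have hB : B - D ≠ 0 := sub_ne_zero.2 fun h => hDa (h ▸ left_mem_affineSpan_pair ℝ B C)
  have hC : C - D ≠ 0 := sub_ne_zero.2 fun h => hDb (h ▸ left_mem_affineSpan_pair ℝ C A)
  have side_perp {X Y P : Pt} (hX : inner ℝ (X - P) (P - D) = 0)
      (hY : inner ℝ (Y - P) (P - D) = 0) : inner ℝ (X - Y) (P - D) = 0 := by
    rw [← sub_sub_sub_cancel_right X Y P, inner_sub_left, hX, hY, sub_zero]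
  subst hAp hBp hCp
  obtain ⟨k₁, hk₁⟩ := exists_eq_smul_of_inner_eq_zero hC
    (sub_ne_zero.2 (ne₁₂_of_not_collinear hpnc))
    (side_perp h2 h3) (inner_invPt_sub_invPt_eq_zero r hFa hDa hFb hDb
      (right_mem_affineSpan_pair ℝ B C) (left_mem_affineSpan_pair ℝ C A))
  obtain ⟨k₂, hk₂⟩ := exists_eq_smul_of_inner_eq_zero hA
    (sub_ne_zero.2 (ne₂₃_of_not_collinear hpnc))
    (side_perp h4 h5) (inner_invPt_sub_invPt_eq_zero r hFb hDb hFc hDc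
      (right_mem_affineSpan_pair ℝ C A) (left_mem_affineSpan_pair ℝ A B))
  obtain ⟨k₃, hk₃⟩ := exists_eq_smul_of_inner_eq_zero hB
    (sub_ne_zero.2 (ne₁₃_of_not_collinear hpnc).symm)
    (side_perp h6 h1) (inner_invPt_sub_invPt_eq_zero r hFc hDc hFa hDa
      (right_mem_affineSpan_pair ℝ A B) (left_mem_affineSpan_pair ℝ B C))
  obtain ⟨h₁₃, h₂₃⟩ := eq_of_not_collinear_of_smul_sides_sum_eq_zero hpnc
    (by rw [← hk₁, ← hk₂, ← hk₃]; abel)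
  refine ⟨k₃, fun hk => hd1 ?_, h₁₃ ▸ hk₁, h₂₃ ▸ hk₂, hk₃⟩
  rw [← sub_eq_zero, hk₁, h₁₃, hk, zero_smul]

/-- **Proposition 4.6**: the negative-pedal triangle `A'B'C'` and the polar triangle
`ApBpCp` of `ABC` w.r.t. `D` are homothetic. -/
theorem negative_pedal_homothetic_polar
    (A B C D : Pt) (r : ℝ) (hr : 0 < r)
    (hABC : ¬ Collinear ℝ ({A, B, C} : Set Pt))
    (hDv : D ∉ ({A, B, C} : Set Pt))
    (hDa : D ∉ L B C) (hDb : D ∉ L C A) (hDc : D ∉ L A B)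
    (Fa Fb Fc Ap Bp Cp : Pt)
    (hFa : IsFoot D B C Fa) (hFb : IsFoot D C A Fb) (hFc : IsFoot D A B Fc)
    (hAp : Ap = invPt D r Fa) (hBp : Bp = invPt D r Fb) (hCp : Cp = invPt D r Fc)
    (hpnc : ¬ Collinear ℝ ({Ap, Bp, Cp} : Set Pt))
    (A' B' C' : Pt)
    (h1 : (inner ℝ (A' - B) (B - D) : ℝ) = 0) (h2 : (inner ℝ (A' - C) (C - D) : ℝ) = 0)
    (h3 : (inner ℝ (B' - C) (C - D) : ℝ) = 0) (h4 : (inner ℝ (B' - A) (A - D) : ℝ) = 0)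
    (h5 : (inner ℝ (C' - A) (A - D) : ℝ) = 0) (h6 : (inner ℝ (C' - B) (B - D) : ℝ) = 0)
    (hd1 : A' ≠ B') (hd2 : B' ≠ C') (hd3 : A' ≠ C') :
    ∃ k : ℝ, k ≠ 0 ∧ A' - B' = k • (Ap - Bp) ∧ B' - C' = k • (Bp - Cp) ∧
      C' - A' = k • (Cp - Ap) :=
  negative_pedal_homothetic_polar_general A B C D r hDa hDb hDc Fa Fb Fc Ap Bp Cp hFa hFb hFc hAp
    hBp hCp hpnc A' B' C' h1 h2 h3 h4 h5 h6 hd1
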